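/- Fix n ∈ ℕ and real numbers α > 0, γ > 0, β ∈ ℝ. For ε > 0 set q = −e^ε, a = e^{ε(2α+1)}, b = e^{ε(2γ+1)}, φ = π/2 + 2εβ, and define the complex quantities A_n(ε) = (1−ab e^{2iφ}q^n)(1−a²q^n)(1−abq^n)(1−a²b²q^{n−1})/(a e^{iφ}(1+q)(1−a²b²q^{2n−1})(1−a²b²q^{2n})) and C_n(ε) = a e^{iφ}(1−q^n)(1−abq^{n−1})(1−b²q^{n−1})(1−ab e^{−2iφ}q^{n−1})/((1+q)(1−a²b²q^{2n−2})(1−a²b²q^{2n−1})). Then as ε → 0⁺, (1/2)·[(a e^{iφ}+a^{−1}e^{−iφ})/(1+q) − (A_n(ε)+C_n(ε))] converges to b_n^K(α,β,γ) and (1/4)·A_{n−1}(ε)·C_n(ε) converges to u_n^K(α,β,γ), where b_n^K = 2β − 2βn/(n+2α+2γ+1) for n even, b_n^K = 2β − 2β(n+4α+4γ+3)/(n+2α+2γ+2) for n odd, u_n^K = n(n+4α+4γ+2)·|n+2α+2γ+1+4iβ|²/(4(n+2α+2γ+1)²) for n even, and u_n^K = (n+4α+1)(n+4γ+1)(n+2α+2γ+1)²/(4(n+2α+2γ+1)²)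 for n odd. -/

import Mathlib

open Filter Complex

/-- The diagonal recurrence coefficient `bₙ` of the continuous `-1` Hahn polynomials
of the first type, parameters `(α,β,γ)`. -/
noncomputable def cM1Hahn1b (α β γ : ℝ) (n : ℕ) : ℝ :=
  if Even n then
    2 * β - 2 * β * (n : ℝ) / ((n : ℝ) + 2 * α + 2 * γ + 1)
  else
    2 * β - 2 * β * ((n : ℝ) + 4 * α + 4 * γ + 3) / ((n : ℝ) + 2 * α + 2 * γ + 2)

/-- The off-diagonal recurrence coefficient `uₙ` of the continuous `-1` Hahn polynomials
of the first type, parameters `(α,β,γ)`; `|z|²` is the squared modulus `Complex.normSq`. -/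
noncomputable def cM1Hahn1u (α β γ : ℝ) (n : ℕ) : ℝ :=
  if Even n then
    (n : ℝ) * ((n : ℝ) + 4 * α + 4 * γ + 2) *
        Complex.normSq (((n : ℝ) + 2 * α + 2 * γ + 1 : ℝ) + (4 * β : ℝ) * Complex.I) /
      (4 * ((n : ℝ) + 2 * α + 2 * γ + 1) ^ 2)
  else
    ((n : ℝ) + 4 * α + 1) * ((n : ℝ) + 4 * γ + 1) * ((n : ℝ) + 2 * α + 2 * γ + 1) ^ 2 /
      (4 * ((n : ℝ) + 2 * α + 2 * γ + 1) ^ 2)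

/-- The coefficient `Aₙ(ε)` of the continuous `q`-Hahn recurrence (with `a = c`, `b = d`),
`q = -e^ε`, `a = e^{ε(2α+1)}`, `b = e^{ε(2γ+1)}`, `φ = π/2 + 2εβ`. -/
noncomputable def cqHahnA (α β γ : ℝ) (n : ℕ) (ε : ℝ) : ℂ :=
  let q : ℂ := (-Real.exp ε : ℝ);
  let a : ℂ := (Real.exp (ε * (2 * α + 1)) : ℝ);
  let b : ℂ := (Real.exp (ε * (2 * γ + 1)) : ℝ);
  let φ : ℝ := Real.pi / 2 + 2 * ε * β;
  (1 - a * b * Complex.exp (2 * Complex.I * (φ : ℂ)) * q ^ n) * (1 - a ^ 2 * q ^ n) *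
      (1 - a * b * q ^ n) * (1 - a ^ 2 * b ^ 2 * q ^ (n - 1)) /
    (a * Complex.exp (Complex.I * (φ : ℂ)) * (1 + q) *
      (1 - a ^ 2 * b ^ 2 * q ^ (2 * n - 1)) * (1 - a ^ 2 * b ^ 2 * q ^ (2 * n)))

/-- The coefficient `Cₙ(ε)` of the continuous `q`-Hahn recurrence (with `a = c`, `b = d`),
same parametrization as `cqHahnA`. -/
noncomputable def cqHahnC (α β γ : ℝ) (n : ℕ) (ε : ℝ) : ℂ :=
  let q : ℂ := (-Real.exp ε : ℝ);
  let a : ℂ := (Real.exp (ε * (2 * α + 1)) : ℝ);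
  let b : ℂ := (Real.exp (ε * (2 * γ + 1)) : ℝ);
  let φ : ℝ := Real.pi / 2 + 2 * ε * β;
  a * Complex.exp (Complex.I * (φ : ℂ)) * (1 - q ^ n) * (1 - a * b * q ^ (n - 1)) *
      (1 - b ^ 2 * q ^ (n - 1)) *
      (1 - a * b * Complex.exp (-(2 * Complex.I * (φ : ℂ))) * q ^ (n - 1)) /
    ((1 + q) * (1 - a ^ 2 * b ^ 2 * q ^ (2 * n - 2)) * (1 - a ^ 2 * b ^ 2 * q ^ (2 * n - 1)))

/-!
With `q = -e^ε`, `a = e^{ε(2α+1)}`, `b = e^{ε(2γ+1)}` and `e^{iφ} = i e^{2iβε}`, every factor of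
`Aₙ` and `Cₙ` is of the form `1 - (-1)^k e^{εc}`. Such a factor tends to `2` when `k` is odd and is
asymptotic to `-cε` when `k` is even. Replacing every factor by its leading term, the powers of `ε`
cancel and `Aₙ`, `Cₙ` converge to rational functions of `n, α, β, γ` whose shape depends on the
parity of `n`; the limits of the two recurrence coefficients follow by algebra.
-/

open Topology Asymptotics

lemma isEquivalent_one_sub_cexp (c : ℂ) :
    (fun ε : ℝ => 1 - cexp (ε * c)) ~[𝓝 0] fun ε => -c * ε := by
  rcases eq_or_ne c 0 with rfl | hc
  · simpa using IsEquivalent.refl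
  have hd : HasDerivAt (fun z : ℂ => 1 - cexp (z * c)) (-c) 0 := by
    simpa using (((hasDerivAt_id (0 : ℂ)).mul_const c).cexp).const_sub 1
  have ho := (hasDerivAt_iff_isLittleO.1 hd).comp_tendsto
    (Complex.continuous_ofReal.tendsto' 0 0 Complex.ofReal_zero)
  refine IsLittleO.isEquivalent
    ((ho.trans_isBigO (isBigO_self_const_mul (neg_ne_zero.2 hc) _ _)).congr' ?_ ?_)
  · exact Eventually.of_forall fun ε => by simp [mul_comm]
  · exact Eventually.of_forall fun ε => by simp

lemma isEquivalent_const_mul_cexp (z c : ℂ) :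
    (fun ε : ℝ => z * cexp (ε * c)) ~[𝓝 0] fun _ => z := by
  have h : (fun ε : ℝ => cexp (ε * c)) ~[𝓝 0] fun _ => 1 :=
    (isEquivalent_const_iff_tendsto one_ne_zero).2 (by
      simpa using ((by fun_prop : Continuous fun ε : ℝ => cexp (ε * c)).tendsto 0))
  simpa [Pi.mul_def] using (IsEquivalent.refl (u := fun _ : ℝ => z)).mul h

lemma tendsto_nhdsNE_of_isEquivalent {u v : ℝ → ℂ} {K : ℂ} (huv : u ~[𝓝 0] v)
    (hv : ∀ ε : ℝ, (ε : ℂ) ≠ 0 → v ε = K) : Tendsto u (𝓝[≠] 0) (𝓝 K) :=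
  (huv.mono nhdsWithin_le_nhds).symm.tendsto_nhds <| tendsto_nhds_of_eventually_eq <|
    eventually_nhdsWithin_of_forall fun _ hε => hv _ (Complex.ofReal_ne_zero.2 hε)

lemma tendsto_one_sub_cexp_div_one_sub_cexp (c : ℂ) {d : ℂ} (hd : d ≠ 0) :
    Tendsto (fun ε : ℝ => (1 - cexp (ε * c)) / (1 - cexp (ε * d))) (𝓝[≠] 0) (𝓝 (c / d)) :=
  tendsto_nhdsNE_of_isEquivalent
    ((isEquivalent_one_sub_cexp c).div (isEquivalent_one_sub_cexp d)) fun ε hε => by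
      simp only [Pi.div_apply]
      field_simp

/-- `1 - q ^ k e^{ε (c - k)}` for `q = -e^ε`. -/
noncomputable def expFactor (k : ℕ) (c : ℂ) : ℝ → ℂ := fun ε => 1 - (-1) ^ k * cexp (ε * c)

lemma expFactor_isEquivalent_of_even {k : ℕ} (hk : Even k) (c : ℂ) :
    expFactor k c ~[𝓝 0] fun ε => -c * ε := by
  unfold expFactor
  simpa only [hk.neg_one_pow, one_mul] using isEquivalent_one_sub_cexp c

lemma expFactor_isEquivalent_of_odd {k : ℕ} (hk : Odd k) (c : ℂ) :
    expFactor k c ~[𝓝 0] fun _ => 2 := by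
  refine (isEquivalent_const_iff_tendsto two_ne_zero).2 ?_
  have h := ((by fun_prop : Continuous fun ε : ℝ => cexp (ε * c)).tendsto 0).const_add 1
  unfold expFactor
  simpa [hk.neg_one_pow, one_add_one_eq_two] using h

lemma cexp_mul_add (ε : ℝ) (c d : ℂ) : cexp (ε * (c + d)) = cexp (ε * c) * cexp (ε * d) := by
  rw [mul_add, Complex.exp_add]

lemma cexp_mul_two_mul (ε : ℝ) (c : ℂ) : cexp (ε * (2 * c)) = cexp (ε * c) ^ 2 := by
  rw [← Complex.exp_nat_mul]
  ring_nf

lemma cexp_mul_neg (ε : ℝ) (c : ℂ) : cexp (ε * -c) = (cexp (ε * c))⁻¹ := by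
  rw [mul_neg, Complex.exp_neg]

lemma cexp_mul_natCast (ε : ℝ) (m : ℕ) : cexp (ε * m) = cexp ε ^ m := by
  rw [← Complex.exp_nat_mul, mul_comm]

lemma cexp_I_mul_phase (ε β : ℝ) :
    cexp (I * ((Real.pi / 2 + 2 * ε * β : ℝ) : ℂ)) = I * cexp (ε * (2 * β * I)) := by
  rw [show I * ((Real.pi / 2 + 2 * ε * β : ℝ) : ℂ) = Real.pi / 2 * I + ε * (2 * β * I) by
    push_cast; ring, Complex.exp_add, Complex.exp_mul_I]
  simp

lemma cexp_two_I_mul_phase (ε β : ℝ) :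
    cexp (2 * I * ((Real.pi / 2 + 2 * ε * β : ℝ) : ℂ)) = -cexp (ε * (2 * (2 * β * I))) := by
  rw [mul_assoc, two_mul, Complex.exp_add, cexp_I_mul_phase, cexp_mul_two_mul]
  linear_combination cexp (ε * (2 * β * I)) ^ 2 * I_sq

lemma cqHahnA_eq (α β γ : ℝ) (n : ℕ) : cqHahnA α β γ n =
    expFactor (n + 1) ((2 * α + 1) + (2 * γ + 1) + 2 * (2 * β * I) + n) *
      expFactor n (2 * (2 * α + 1) + n) * expFactor n ((2 * α + 1) + (2 * γ + 1) + n) *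
      expFactor (n - 1) (2 * (2 * α + 1) + 2 * (2 * γ + 1) + (n - 1 : ℕ)) /
    ((fun ε : ℝ => I * cexp (ε * ((2 * α + 1) + 2 * β * I))) * expFactor 0 1 *
      expFactor (2 * n - 1) (2 * (2 * α + 1) + 2 * (2 * γ + 1) + (2 * n - 1 : ℕ)) *
      expFactor (2 * n) (2 * (2 * α + 1) + 2 * (2 * γ + 1) + (2 * n : ℕ))) := by
  funext ε
  simp only [cqHahnA, expFactor, Pi.mul_apply, Pi.div_apply, cexp_I_mul_phase,
    cexp_two_I_mul_phase]
  simp only [Complex.ofReal_exp, Complex.ofReal_mul, Complex.ofReal_add, Complex.ofReal_neg,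
    Complex.ofReal_ofNat, Complex.ofReal_one, neg_pow (cexp (ε : ℂ)), cexp_mul_add,
    cexp_mul_two_mul, cexp_mul_natCast, mul_one]
  ring

lemma cqHahnC_eq (α β γ : ℝ) (n : ℕ) : cqHahnC α β γ n =
    (fun ε : ℝ => I * cexp (ε * ((2 * α + 1) + 2 * β * I))) * expFactor n n *
      expFactor (n - 1) ((2 * α + 1) + (2 * γ + 1) + (n - 1 : ℕ)) *
      expFactor (n - 1) (2 * (2 * γ + 1) + (n - 1 : ℕ)) *
      -- `n - 1 + 1` rather than `n`: for `n = 0` this factor comes from `q ^ (0 - 1) = q ^ 0`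
      expFactor (n - 1 + 1) ((2 * α + 1) + (2 * γ + 1) - 2 * (2 * β * I) + (n - 1 : ℕ)) /
    (expFactor 0 1 *
      expFactor (2 * n - 2) (2 * (2 * α + 1) + 2 * (2 * γ + 1) + (2 * n - 2 : ℕ)) *
      expFactor (2 * n - 1) (2 * (2 * α + 1) + 2 * (2 * γ + 1) + (2 * n - 1 : ℕ))) := by
  funext ε
  simp only [cqHahnC, expFactor, Pi.mul_apply, Pi.div_apply, cexp_I_mul_phase,
    cexp_two_I_mul_phase, Complex.exp_neg]
  simp only [Complex.ofReal_exp, Complex.ofReal_mul, Complex.ofReal_add, Complex.ofReal_neg,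
    Complex.ofReal_ofNat, Complex.ofReal_one, neg_pow (cexp (ε : ℂ)), cexp_mul_add,
    cexp_mul_two_mul, cexp_mul_natCast, mul_one, sub_eq_add_neg, cexp_mul_neg, pow_succ]
  ring

noncomputable def cqHahnCenter (α β : ℝ) (ε : ℝ) : ℂ :=
  let q : ℂ := (-Real.exp ε : ℝ)
  let a : ℂ := (Real.exp (ε * (2 * α + 1)) : ℝ)
  let φ : ℝ := Real.pi / 2 + 2 * ε * β
  (a * Complex.exp (Complex.I * (φ : ℂ)) + a⁻¹ * Complex.exp (-(Complex.I * (φ : ℂ)))) / (1 + q)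

lemma cqHahnCenter_eq (α β : ℝ) : cqHahnCenter α β = fun ε : ℝ =>
    I * ((1 - cexp (ε * -((2 * α + 1) + 2 * β * I))) / (1 - cexp (ε * 1)) -
      (1 - cexp (ε * ((2 * α + 1) + 2 * β * I))) / (1 - cexp (ε * 1))) := by
  funext ε
  simp only [cqHahnCenter, Complex.exp_neg, cexp_I_mul_phase, mul_inv, Complex.inv_I]
  simp only [Complex.ofReal_exp, Complex.ofReal_mul, Complex.ofReal_add, Complex.ofReal_neg,
    Complex.ofReal_ofNat, Complex.ofReal_one, cexp_mul_add, cexp_mul_two_mul, cexp_mul_neg, mul_one]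
  ring

theorem tendsto_cqHahnCenter (α β : ℝ) :
    Tendsto (cqHahnCenter α β) (𝓝[≠] 0) (𝓝 (-2 * I * (2 * α + 1 + 2 * β * I))) := by
  rw [cqHahnCenter_eq]
  convert ((tendsto_one_sub_cexp_div_one_sub_cexp _ one_ne_zero).sub
    (tendsto_one_sub_cexp_div_one_sub_cexp _ one_ne_zero)).const_mul I using 2
  ring

section Limits

variable {α γ : ℝ}

theorem tendsto_cqHahnA_of_even (hα : 0 < α) (hγ : 0 < γ) (β : ℝ) {m : ℕ} (hm : Even m) :
    Tendsto (cqHahnA α β γ m) (𝓝[≠] 0) (𝓝 (-I * (m + 4 * α + 2))) := by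
  rw [cqHahnA_eq]
  -- for `m = 0` the truncated `m - 1` and `2 * m - 1` are even, so two more factors vanish
  rcases Nat.eq_zero_or_pos m with rfl | hpos
  · refine tendsto_nhdsNE_of_isEquivalent
      ((((((expFactor_isEquivalent_of_odd odd_one _).mul
        (expFactor_isEquivalent_of_even Even.zero _)).mul
        (expFactor_isEquivalent_of_even Even.zero _)).mul
        (expFactor_isEquivalent_of_even Even.zero _)).div
        ((((isEquivalent_const_mul_cexp I _).mul (expFactor_isEquivalent_of_even Even.zero _)).mul
          (expFactor_isEquivalent_of_even Even.zero _)).mul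
          (expFactor_isEquivalent_of_even Even.zero _)))) fun ε hε => ?_
    simp only [Pi.mul_apply, Pi.div_apply]
    push_cast
    field_simp (disch := first | assumption | exact I_ne_zero |
      exact Complex.ne_zero_of_re_pos (by simp; positivity))
    rw [I_sq]
    ring
  · have h2 := Nat.even_iff.1 hm
    refine tendsto_nhdsNE_of_isEquivalent
      ((((((expFactor_isEquivalent_of_odd hm.add_one _).mul
        (expFactor_isEquivalent_of_even hm _)).mul (expFactor_isEquivalent_of_even hm _)).mul
        (expFactor_isEquivalent_of_odd (Nat.odd_iff.2 (by omega)) _)).div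
        ((((isEquivalent_const_mul_cexp I _).mul (expFactor_isEquivalent_of_even Even.zero _)).mul
          (expFactor_isEquivalent_of_odd (Nat.odd_iff.2 (by omega)) _)).mul
          (expFactor_isEquivalent_of_even (even_two_mul m) _)))) fun ε hε => ?_
    simp only [Pi.mul_apply, Pi.div_apply]
    push_cast
    field_simp (disch := first | assumption | exact I_ne_zero |
      exact Complex.ne_zero_of_re_pos (by simp; positivity))
    rw [I_sq]
    ring

theorem tendsto_cqHahnA_of_odd (hα : 0 < α) (hγ : 0 < γ) (β : ℝ) {m : ℕ} (hm : Odd m) :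
    Tendsto (cqHahnA α β γ m) (𝓝[≠] 0)
      (𝓝 (-I * (m + 2 * α + 2 * γ + 2 + 4 * β * I) * (m + 4 * α + 4 * γ + 3) /
        (m + 2 * α + 2 * γ + 2))) := by
  have h2 := Nat.odd_iff.1 hm
  rw [cqHahnA_eq]
  refine tendsto_nhdsNE_of_isEquivalent
    ((((((expFactor_isEquivalent_of_even hm.add_one _).mul
      (expFactor_isEquivalent_of_odd hm _)).mul (expFactor_isEquivalent_of_odd hm _)).mul
      (expFactor_isEquivalent_of_even (Nat.even_iff.2 (by omega)) _)).div
      ((((isEquivalent_const_mul_cexp I _).mul (expFactor_isEquivalent_of_even Even.zero _)).mul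
        (expFactor_isEquivalent_of_odd (Nat.odd_iff.2 (by omega)) _)).mul
        (expFactor_isEquivalent_of_even (even_two_mul m) _)))) fun ε hε => ?_
  simp only [Pi.mul_apply, Pi.div_apply]
  push_cast [Nat.cast_sub hm.pos]
  field_simp (disch := first | assumption | exact I_ne_zero |
    exact Complex.ne_zero_of_re_pos (by simp; positivity))
  rw [I_sq]
  ring

theorem tendsto_cqHahnC_of_even (hα : 0 < α) (hγ : 0 < γ) (β : ℝ) {m : ℕ} (hm : Even m) :
    Tendsto (cqHahnC α β γ m) (𝓝[≠] 0)
      (𝓝 (I * m * (m + 2 * α + 2 * γ + 1 - 4 * β * I) / (m + 2 * α + 2 * γ + 1))) := by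
  rcases Nat.eq_zero_or_pos m with rfl | hpos
  · have hC : cqHahnC α β γ 0 = fun _ => 0 := funext fun ε => by simp [cqHahnC]
    simp [hC]
  obtain ⟨k, rfl⟩ : ∃ k, m = 2 * k + 2 := ⟨m / 2 - 1, by rcases hm with ⟨j, rfl⟩; omega⟩
  rw [cqHahnC_eq]
  refine tendsto_nhdsNE_of_isEquivalent
    ((((((isEquivalent_const_mul_cexp I _).mul (expFactor_isEquivalent_of_even hm _)).mul
      (expFactor_isEquivalent_of_odd (Nat.odd_iff.2 (by omega)) _)).mul
      (expFactor_isEquivalent_of_odd (Nat.odd_iff.2 (by omega)) _)).mul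
      (expFactor_isEquivalent_of_even (Nat.even_iff.2 (by omega)) _)).div
      (((expFactor_isEquivalent_of_even Even.zero _).mul
        (expFactor_isEquivalent_of_even (Nat.even_iff.2 (by omega)) _)).mul
        (expFactor_isEquivalent_of_odd (Nat.odd_iff.2 (by omega)) _))) fun ε hε => ?_
  simp only [Pi.mul_apply, Pi.div_apply, show 2 * k + 2 - 1 = 2 * k + 1 by omega,
    show 2 * (2 * k + 2) - 2 = 4 * k + 2 by omega]
  push_cast
  field_simp (disch := first | assumption | exact Complex.ne_zero_of_re_pos (by simp; positivity))
  ring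

theorem tendsto_cqHahnC_of_odd (hα : 0 < α) (hγ : 0 < γ) (β : ℝ) {m : ℕ} (hm : Odd m) :
    Tendsto (cqHahnC α β γ m) (𝓝[≠] 0) (𝓝 (I * (m + 4 * γ + 1))) := by
  obtain ⟨k, rfl⟩ := hm
  rw [cqHahnC_eq]
  refine tendsto_nhdsNE_of_isEquivalent
    ((((((isEquivalent_const_mul_cexp I _).mul (expFactor_isEquivalent_of_odd ⟨k, rfl⟩ _)).mul
      (expFactor_isEquivalent_of_even (Nat.even_iff.2 (by omega)) _)).mul
      (expFactor_isEquivalent_of_even (Nat.even_iff.2 (by omega)) _)).mul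
      (expFactor_isEquivalent_of_odd (Nat.odd_iff.2 (by omega)) _)).div
      (((expFactor_isEquivalent_of_even Even.zero _).mul
        (expFactor_isEquivalent_of_even (Nat.even_iff.2 (by omega)) _)).mul
        (expFactor_isEquivalent_of_odd (Nat.odd_iff.2 (by omega)) _))) fun ε hε => ?_
  simp only [Pi.mul_apply, Pi.div_apply, show 2 * (2 * k + 1) - 2 = 4 * k by omega,
    Nat.add_sub_cancel]
  push_cast
  field_simp (disch := first | assumption | exact Complex.ne_zero_of_re_pos (by simp; positivity))
  ring

theorem tendsto_cqHahn_diag (hα : 0 < α) (hγ : 0 < γ) (β : ℝ) (n : ℕ) :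
    Tendsto (fun ε => (1 / 2 : ℂ) *
        (cqHahnCenter α β ε - (cqHahnA α β γ n ε + cqHahnC α β γ n ε)))
      (𝓝[≠] 0) (𝓝 (cM1Hahn1b α β γ n : ℂ)) := by
  have hcenter := tendsto_cqHahnCenter α β
  rcases Nat.even_or_odd n with hn | hn
  · convert (hcenter.sub ((tendsto_cqHahnA_of_even hα hγ β hn).add
      (tendsto_cqHahnC_of_even hα hγ β hn))).const_mul (1 / 2 : ℂ) using 2
    rw [cM1Hahn1b, if_pos hn]
    push_cast
    field_simp (disch := exact Complex.ne_zero_of_re_pos (by simp; positivity))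
    ring_nf
    rw [I_sq]
    ring
  · convert (hcenter.sub ((tendsto_cqHahnA_of_odd hα hγ β hn).add
      (tendsto_cqHahnC_of_odd hα hγ β hn))).const_mul (1 / 2 : ℂ) using 2
    rw [cM1Hahn1b, if_neg (Nat.not_even_iff_odd.2 hn)]
    push_cast
    field_simp (disch := exact Complex.ne_zero_of_re_pos (by simp; positivity))
    ring_nf
    rw [I_sq]
    ring

theorem tendsto_cqHahn_offDiag (hα : 0 < α) (hγ : 0 < γ) (β : ℝ) (n : ℕ) :
    Tendsto (fun ε => (1 / 4 : ℂ) * cqHahnA α β γ (n - 1) ε * cqHahnC α β γ n ε)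
      (𝓝[≠] 0) (𝓝 (cM1Hahn1u α β γ n : ℂ)) := by
  rcases n with _ | m
  · rw [Nat.zero_sub]
    convert ((tendsto_cqHahnA_of_even hα hγ β Even.zero).const_mul (1 / 4 : ℂ)).mul
      (tendsto_cqHahnC_of_even hα hγ β Even.zero) using 2
    simp [cM1Hahn1u]
  rw [Nat.add_sub_cancel]
  rcases Nat.even_or_odd m with hm | hm
  · convert ((tendsto_cqHahnA_of_even hα hγ β hm).const_mul (1 / 4 : ℂ)).mul
      (tendsto_cqHahnC_of_odd hα hγ β hm.add_one) using 2
    rw [cM1Hahn1u, if_neg (Nat.not_even_iff_odd.2 hm.add_one)]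
    push_cast
    field_simp (disch := exact Complex.ne_zero_of_re_pos (by simp; positivity))
    ring_nf
    rw [I_sq]
    ring
  · convert ((tendsto_cqHahnA_of_odd hα hγ β hm).const_mul (1 / 4 : ℂ)).mul
      (tendsto_cqHahnC_of_even hα hγ β hm.add_one) using 2
    rw [cM1Hahn1u, if_pos hm.add_one, Complex.normSq_add_mul_I]
    push_cast
    field_simp (disch := exact Complex.ne_zero_of_re_pos (by simp; positivity))
    ring_nf
    simp only [I_sq, I_pow_four]
    ring

end Limits

/-- the `q → -1` limit of the monic continuous `q`-Hahn recurrence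
coefficients (with `q = -e^ε`, `a = e^{ε(2α+1)}`, `b = e^{ε(2γ+1)}`, `φ = π/2 + 2εβ`)
yields the recurrence coefficients of the continuous `-1` Hahn polynomials of type 1. -/
theorem continuousQHahn_to_continuousM1Hahn_limit
    (n : ℕ) (α β γ : ℝ) (hα : α > 0) (hγ : γ > 0) :
    Tendsto (fun ε : ℝ =>
        let q : ℂ := (-Real.exp ε : ℝ);
        let a : ℂ := (Real.exp (ε * (2 * α + 1)) : ℝ);
        let φ : ℝ := Real.pi / 2 + 2 * ε * β;
        (1 / 2 : ℂ) * ((a * Complex.exp (Complex.I * (φ : ℂ)) +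
            a⁻¹ * Complex.exp (-(Complex.I * (φ : ℂ)))) / (1 + q)
          - (cqHahnA α β γ n ε + cqHahnC α β γ n ε)))
      (nhdsWithin 0 (Set.Ioi 0)) (nhds ((cM1Hahn1b α β γ n : ℝ) : ℂ)) ∧
    Tendsto (fun ε : ℝ => (1 / 4 : ℂ) * cqHahnA α β γ (n - 1) ε * cqHahnC α β γ n ε)
      (nhdsWithin 0 (Set.Ioi 0)) (nhds ((cM1Hahn1u α β γ n : ℝ) : ℂ)) :=
  ⟨(tendsto_cqHahn_diag hα hγ β n).mono_left (nhdsGT_le_nhdsNE 0),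
    (tendsto_cqHahn_offDiag hα hγ β n).mono_left (nhdsGT_le_nhdsNE 0)⟩
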